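/- Let k₁,…,kₙ ≥ 0, N = n + 2∑kⱼ, and μ the measure on ℝⁿ with density ∏ⱼ|xⱼ|^{2kⱼ}. Then for every x ∈ ℝⁿ and 0 < r ≤ R, (R/r)^n ≲ μ(B(x,R))/μ(B(x,r)) ≲ (R/r)^N, with implied constants independent of x, r, R. -/

import Mathlib

/-!
The measure of a ball is comparable to the profile `r ^ n * ∏ j, (|x j| + r) ^ (2 * k j)`.
From above, the density is at most `∏ j, (|x j| + r) ^ (2 * k j)` on `B(x, r)`. From below,
`B(x, r)` contains a cube of side `≍ r` pushed away from the hyperplanes `{y_j = 0}`, on which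
`|y j| ≳ |x j| + r`. The ratio bounds then hold for the profile itself, since
`r ↦ |x j| + r` is increasing and `|x j| + R ≤ (R / r) * (|x j| + r)`.
-/

open Real MeasureTheory

/-- The product Dunkl measure `∏ⱼ |xⱼ|^{2kⱼ} dx` on `ℝⁿ`. -/
noncomputable def dunklMeasure (n : ℕ) (k : Fin n → ℝ) : Measure (EuclideanSpace ℝ (Fin n)) :=
  volume.withDensity (fun x => ∏ j, ENNReal.ofReal (|x j| ^ (2 * k j)))

open Set Metric

lemma ENNReal.ofReal_div_mul_mul_le {m m' : ENNReal} {a b t φ φ' : ℝ} (ha : 0 < a) (hb : 0 < b)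
    (ht : 0 ≤ t) (hm : m ≤ ENNReal.ofReal (b * φ)) (hm' : ENNReal.ofReal (a * φ') ≤ m')
    (hφ : t * φ ≤ φ') : ENNReal.ofReal (a / b * t) * m ≤ m' :=
  calc ENNReal.ofReal (a / b * t) * m
      ≤ ENNReal.ofReal (a / b * t) * ENNReal.ofReal (b * φ) := by gcongr
    _ = ENNReal.ofReal (a * (t * φ)) := by
        rw [← ENNReal.ofReal_mul (by positivity)]; field_simp
    _ ≤ ENNReal.ofReal (a * φ') := by gcongr
    _ ≤ m' := hm'

lemma ENNReal.le_ofReal_div_mul_mul {m m' : ENNReal} {a b t φ φ' : ℝ} (ha : 0 < a) (hb : 0 ≤ b)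
    (ht : 0 ≤ t) (hm : m ≤ ENNReal.ofReal (b * φ)) (hm' : ENNReal.ofReal (a * φ') ≤ m')
    (hφ : φ ≤ t * φ') : m ≤ ENNReal.ofReal (b / a * t) * m' :=
  calc m ≤ ENNReal.ofReal (b * φ) := hm
    _ ≤ ENNReal.ofReal (b * (t * φ')) := by gcongr
    _ = ENNReal.ofReal (b / a * t) * ENNReal.ofReal (a * φ') := by
        rw [← ENNReal.ofReal_mul (by positivity)]; field_simp
    _ ≤ ENNReal.ofReal (b / a * t) * m' := by gcongr

lemma exists_Icc_near_and_away_from_zero (a δ : ℝ) :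
    ∃ u, ∀ t ∈ Icc u (u + δ / 2), |t - a| ≤ δ ∧ (|a| + δ) / 2 ≤ |t| := by
  rcases le_or_gt 0 a with ha | ha
  · refine ⟨a + δ / 2, fun t ⟨ht₁, ht₂⟩ => ⟨abs_le.2 ⟨by linarith, by linarith⟩, ?_⟩⟩
    rw [abs_of_nonneg ha, abs_of_nonneg (by linarith)]
    linarith
  · refine ⟨a - δ, fun t ⟨ht₁, ht₂⟩ => ⟨abs_le.2 ⟨by linarith, by linarith⟩, ?_⟩⟩
    rw [abs_of_neg ha, abs_of_neg (by linarith)]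
    linarith

namespace EuclideanSpace

variable {ι : Type*} [Fintype ι]

lemma abs_apply_sub_le_dist (x y : EuclideanSpace ℝ ι) (j : ι) : |y j - x j| ≤ dist y x := by
  simpa [dist_eq_norm] using PiLp.norm_apply_le (y - x) j

lemma dist_le_sqrt_card_mul {x y : EuclideanSpace ℝ ι} {δ : ℝ} (hδ : 0 ≤ δ)
    (h : ∀ j, |y j - x j| ≤ δ) : dist y x ≤ √(Fintype.card ι) * δ := by
  rw [dist_eq, ← Real.sqrt_sq hδ, ← Real.sqrt_mul (Nat.cast_nonneg _)]
  refine Real.sqrt_le_sqrt ?_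
  calc ∑ j, dist (y j) (x j) ^ 2 ≤ ∑ _j : ι, δ ^ 2 :=
        Finset.sum_le_sum fun j _ => by
          simpa only [Real.dist_eq, sq_abs] using pow_le_pow_left₀ (abs_nonneg _) (h j) 2
    _ = Fintype.card ι * δ ^ 2 := by simp

lemma volume_setOf_forall_apply_mem_Icc (a b : ι → ℝ) :
    volume {y : EuclideanSpace ℝ ι | ∀ j, y j ∈ Icc (a j) (b j)} =
      ∏ j, ENNReal.ofReal (b j - a j) := by
  have : {y : EuclideanSpace ℝ ι | ∀ j, y j ∈ Icc (a j) (b j)} =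
      (MeasurableEquiv.toLp 2 (ι → ℝ)).symm ⁻¹' univ.pi fun j => Icc (a j) (b j) := by
    ext y
    simp only [mem_preimage, mem_univ_pi, mem_ofPred_eq]
    rfl
  rw [this, (volume_preserving_symm_measurableEquiv_toLp ι).measure_preimage
    (MeasurableSet.univ_pi fun _ => measurableSet_Icc).nullMeasurableSet, volume_pi_pi]
  simp [Real.volume_Icc]

end EuclideanSpace

section Profile

variable {n : ℕ} {k : Fin n → ℝ}

noncomputable def ballProfile (k : Fin n → ℝ) (x : EuclideanSpace ℝ (Fin n)) (r : ℝ) : ℝ :=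
  r ^ n * ∏ j, (|x j| + r) ^ (2 * k j)

lemma rpow_mul_ballProfile_le (hk : ∀ j, 0 ≤ k j) (x : EuclideanSpace ℝ (Fin n)) {r R : ℝ}
    (hr : 0 < r) (hrR : r ≤ R) : (R / r) ^ (n : ℝ) * ballProfile k x r ≤ ballProfile k x R := by
  have hR : 0 < R := hr.trans_le hrR
  calc (R / r) ^ (n : ℝ) * ballProfile k x r = R ^ n * ∏ j, (|x j| + r) ^ (2 * k j) := by
        rw [ballProfile, rpow_natCast, div_pow]; field_simp
    _ ≤ ballProfile k x R := by
        unfold ballProfile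
        gcongr with j
        linarith [hk j]

lemma ballProfile_le_rpow_mul (hk : ∀ j, 0 ≤ k j) (x : EuclideanSpace ℝ (Fin n)) {r R : ℝ}
    (hr : 0 < r) (hrR : r ≤ R) :
    ballProfile k x R ≤ (R / r) ^ ((n : ℝ) + ∑ j, 2 * k j) * ballProfile k x r := by
  have hR : 0 < R := hr.trans_le hrR
  have hRr : 0 < R / r := div_pos hR hr
  have hcoord : ∀ j, |x j| + R ≤ R / r * (|x j| + r) := fun j => by
    rw [div_mul_eq_mul_div, le_div_iff₀ hr]
    nlinarith [abs_nonneg (x j)]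
  calc ballProfile k x R ≤ ((R / r) * r) ^ n * ∏ j, (R / r * (|x j| + r)) ^ (2 * k j) := by
        rw [div_mul_cancel₀ _ hr.ne', ballProfile]
        gcongr with j
        · linarith [hk j]
        · exact hcoord j
    _ = (R / r) ^ ((n : ℝ) + ∑ j, 2 * k j) * ballProfile k x r := by
        simp_rw [ballProfile, rpow_add hRr, rpow_natCast, rpow_sum_of_pos hRr,
          mul_rpow hRr.le (by positivity : 0 ≤ |x _| + r), Finset.prod_mul_distrib, mul_pow]
        ring

end Profile

section DunklMeasure

variable {n : ℕ} {k : Fin n → ℝ}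

lemma dunklMeasure_eq_withDensity :
    dunklMeasure n k = volume.withDensity fun y => ENNReal.ofReal (∏ j, |y j| ^ (2 * k j)) := by
  simp_rw [dunklMeasure, ENNReal.ofReal_prod_of_nonneg fun j _ => rpow_nonneg (abs_nonneg _) _]

lemma dunklMeasure_le_ofReal_mul_volume {s : Set (EuclideanSpace ℝ (Fin n))} (hs : MeasurableSet s)
    {M : ℝ} (h : ∀ y ∈ s, ∏ j, |y j| ^ (2 * k j) ≤ M) :
    dunklMeasure n k s ≤ ENNReal.ofReal M * volume s := by
  rw [dunklMeasure_eq_withDensity, withDensity_apply _ hs, ← setLIntegral_const]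
  exact setLIntegral_mono' hs fun y hy => ENNReal.ofReal_le_ofReal (h y hy)

lemma ofReal_mul_volume_le_dunklMeasure {s : Set (EuclideanSpace ℝ (Fin n))} (hs : MeasurableSet s)
    {m : ℝ} (h : ∀ y ∈ s, m ≤ ∏ j, |y j| ^ (2 * k j)) :
    ENNReal.ofReal m * volume s ≤ dunklMeasure n k s := by
  rw [dunklMeasure_eq_withDensity, withDensity_apply _ hs, ← setLIntegral_const]
  exact setLIntegral_mono' hs fun y hy => ENNReal.ofReal_le_ofReal (h y hy)

lemma dunklMeasure_closedBall_le (hk : ∀ j, 0 ≤ k j) (x : EuclideanSpace ℝ (Fin n)) {R : ℝ}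
    (hR : 0 ≤ R) :
    dunklMeasure n k (closedBall x R) ≤
      ENNReal.ofReal (volume.real (closedBall (0 : EuclideanSpace ℝ (Fin n)) 1) *
        ballProfile k x R) := by
  have hdensity : ∀ y ∈ closedBall x R, ∏ j, |y j| ^ (2 * k j) ≤ ∏ j, (|x j| + R) ^ (2 * k j) :=
    fun y hy => Finset.prod_le_prod (fun j _ => by positivity) fun j _ => by
      have := EuclideanSpace.abs_apply_sub_le_dist x y j
      gcongr
      · linarith [hk j]
      · linarith [abs_sub_abs_le_abs_sub (y j) (x j), mem_closedBall.1 hy]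
  calc dunklMeasure n k (closedBall x R)
      ≤ ENNReal.ofReal (∏ j, (|x j| + R) ^ (2 * k j)) * volume (closedBall x R) :=
        dunklMeasure_le_ofReal_mul_volume measurableSet_closedBall hdensity
    _ = _ := by
        rw [Measure.addHaar_closedBall' _ _ hR, finrank_euclideanSpace_fin, ballProfile,
          ← ENNReal.ofReal_toReal measure_closedBall_lt_top.ne, ← measureReal_def,
          ← ENNReal.ofReal_mul (by positivity), ← ENNReal.ofReal_mul (by positivity)]
        congr 1; ring

lemma exists_ofReal_mul_ballProfile_le_dunklMeasure_closedBall (hk : ∀ j, 0 ≤ k j) :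
    ∃ c > 0, ∀ (x : EuclideanSpace ℝ (Fin n)) (R : ℝ), 0 ≤ R →
      ENNReal.ofReal (c * ballProfile k x R) ≤ dunklMeasure n k (closedBall x R) := by
  set κ : ℝ := (√n + 1)⁻¹ with hκ
  have hκ₀ : 0 < κ := by positivity
  have hκ₁ : κ ≤ 1 := inv_le_one_of_one_le₀ (by linarith [sqrt_nonneg n])
  have hκn : √n * κ ≤ 1 := by
    rw [hκ, ← div_eq_mul_inv, div_le_one (by positivity)]; linarith
  refine ⟨(κ / 2) ^ n * ∏ j, (κ / 2) ^ (2 * k j), by positivity, fun x R hR => ?_⟩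
  choose u hu using fun j => exists_Icc_near_and_away_from_zero (x j) (κ * R)
  set Q := {y : EuclideanSpace ℝ (Fin n) | ∀ j, y j ∈ Icc (u j) (u j + κ * R / 2)}
  have hQ_meas : MeasurableSet Q := by measurability
  have hQ_sub : Q ⊆ closedBall x R := fun y hy => by
    have := EuclideanSpace.dist_le_sqrt_card_mul (by positivity) fun j => (hu j (y j) (hy j)).1
    rw [Fintype.card_fin] at this
    rw [mem_closedBall]
    nlinarith
  have hQ_density : ∀ y ∈ Q, ∏ j, (κ / 2 * (|x j| + R)) ^ (2 * k j) ≤ ∏ j, |y j| ^ (2 * k j) :=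
    fun y hy => Finset.prod_le_prod (fun j _ => by positivity) fun j _ => by
      have := (hu j (y j) (hy j)).2
      gcongr
      · linarith [hk j]
      · nlinarith [abs_nonneg (x j)]
  calc ENNReal.ofReal (((κ / 2) ^ n * ∏ j, (κ / 2) ^ (2 * k j)) * ballProfile k x R)
      = ENNReal.ofReal (∏ j, (κ / 2 * (|x j| + R)) ^ (2 * k j)) * volume Q := by
        rw [EuclideanSpace.volume_setOf_forall_apply_mem_Icc]
        simp only [add_sub_cancel_left, Finset.prod_const, Finset.card_univ, Fintype.card_fin]
        rw [← ENNReal.ofReal_pow (by positivity),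
          ← ENNReal.ofReal_mul (Finset.prod_nonneg fun j _ => by positivity)]
        simp_rw [mul_rpow (by positivity : 0 ≤ κ / 2) (by positivity : 0 ≤ |x _| + R),
          Finset.prod_mul_distrib, ballProfile]
        congr 1; ring
    _ ≤ dunklMeasure n k Q := ofReal_mul_volume_le_dunklMeasure hQ_meas hQ_density
    _ ≤ dunklMeasure n k (closedBall x R) := measure_mono hQ_sub

end DunklMeasure

theorem measure_ball_ratio (n : ℕ) (k : Fin n → ℝ) (hk : ∀ j, 0 ≤ k j) :
    ∃ c > 0, ∃ C > 0, ∀ x : EuclideanSpace ℝ (Fin n), ∀ r R : ℝ, 0 < r → r ≤ R →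
      ENNReal.ofReal (c * (R / r) ^ (n : ℝ)) * dunklMeasure n k (Metric.closedBall x r) ≤
        dunklMeasure n k (Metric.closedBall x R) ∧
      dunklMeasure n k (Metric.closedBall x R) ≤
        ENNReal.ofReal (C * (R / r) ^ ((n : ℝ) + ∑ j, 2 * k j)) *
          dunklMeasure n k (Metric.closedBall x r) := by
  obtain ⟨c, hc, hlower⟩ := exists_ofReal_mul_ballProfile_le_dunklMeasure_closedBall hk
  set V := volume.real (closedBall (0 : EuclideanSpace ℝ (Fin n)) 1)
  have hV : 0 < V :=
    ENNReal.toReal_pos (measure_closedBall_pos _ _ one_pos).ne' measure_closedBall_lt_top.ne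
  refine ⟨c / V, by positivity, V / c, by positivity, fun x r R hr hrR => ?_⟩
  have hR : 0 < R := hr.trans_le hrR
  constructor
  · exact ENNReal.ofReal_div_mul_mul_le hc hV (by positivity)
      (dunklMeasure_closedBall_le hk x hr.le) (hlower x R hR.le)
      (rpow_mul_ballProfile_le hk x hr hrR)
  · exact ENNReal.le_ofReal_div_mul_mul hc hV.le (by positivity)
      (dunklMeasure_closedBall_le hk x hR.le) (hlower x r hr.le)
      (ballProfile_le_rpow_mul hk x hr hrR)
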